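/- Let χ and χ' be two non-Archimedean norms on an n-dimensional complex vector space V. Then there exists a basis e = (e₁,…,eₙ) of V that simultaneously diagonalizes both χ and χ'; that is, any two points of the space of non-Archimedean norms belong to a common apartment. -/

import Mathlib

/-- A non-Archimedean norm (additive notation, trivial absolute value on `ℂ`). -/
def IsNANorm {V : Type*} [AddCommGroup V] [Module ℂ V] (χ : V → EReal) : Prop :=
  (∀ v w : V, min (χ v) (χ w) ≤ χ (v + w)) ∧
  (∀ (a : ℂ) (v : V), a ≠ 0 → χ (a • v) = χ v) ∧
  (∀ v : V, χ v = ⊤ ↔ v = 0) ∧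
  (∀ v : V, χ v ≠ ⊥)

/-- `χ` is diagonalized by the basis `b` if `χ(∑ aᵢ eᵢ) = min {χ(eᵢ) : aᵢ ≠ 0}`. -/
def DiagonalizedBy {V : Type*} [AddCommGroup V] [Module ℂ V] {n : ℕ}
    (b : Module.Basis (Fin n) ℂ V) (χ : V → EReal) : Prop :=
  ∀ a : Fin n → ℂ, χ (∑ i, a i • b i) = ⨅ (i : Fin n) (_ : a i ≠ 0), χ (b i)

/-!
Let `m` be the least value of `χ` (its range is finite, being read off the flag of superlevel
subspaces). The vectors with `χ > m` form a proper subspace, contained in the kernel `H` of some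
nonzero functional `f`; off `H` the norm `χ` is constantly `m`. On the affine hyperplane
`f = 1` pick `e` maximising `χ'`. Then `e` maximises both norms on the coset `e + H`, which
makes it orthogonal to `H`: `χ(c e + h) = min (χ e) (χ h)` for `c ≠ 0`, `h ∈ H`, and likewise
for `χ'`. Induction on the dimension gives a common diagonalising basis of `H`, and prepending `e` gives one of `V`.
-/

open Module

theorem iInf_fin_succ {α : Type*} [CompleteLattice α] {n : ℕ} (g : Fin (n + 1) → α) :
    ⨅ i, g i = g 0 ⊓ ⨅ i : Fin n, g i.succ := by
  rw [← Finset.inf_univ_eq_iInf, Fin.univ_succ, Finset.inf_cons, Finset.inf_map,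
    ← Finset.inf_univ_eq_iInf]
  rfl

namespace IsNANorm

variable {V : Type*} [AddCommGroup V] [Module ℂ V] {χ : V → EReal}

theorem map_zero (hχ : IsNANorm χ) : χ 0 = ⊤ := (hχ.2.2.1 0).mpr rfl

theorem min_le_map_add (hχ : IsNANorm χ) (v w : V) : min (χ v) (χ w) ≤ χ (v + w) := hχ.1 v w

theorem map_smul (hχ : IsNANorm χ) {a : ℂ} (ha : a ≠ 0) (v : V) : χ (a • v) = χ v :=
  hχ.2.1 a v ha

theorem le_map_smul (hχ : IsNANorm χ) (a : ℂ) (v : V) : χ v ≤ χ (a • v) := by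
  rcases eq_or_ne a 0 with rfl | ha
  · simp [hχ.map_zero]
  · rw [hχ.map_smul ha]

theorem map_neg (hχ : IsNANorm χ) (v : V) : χ (-v) = χ v := by
  simpa using hχ.map_smul (neg_ne_zero.mpr one_ne_zero) v

theorem comp {W : Type*} [AddCommGroup W] [Module ℂ W] (hχ : IsNANorm χ) {f : W →ₗ[ℂ] V}
    (hf : Function.Injective f) : IsNANorm (χ ∘ f) := by
  refine ⟨fun v w => ?_, fun a v ha => ?_, fun v => ?_, fun v => hχ.2.2.2 (f v)⟩
  · simpa using hχ.min_le_map_add (f v) (f w)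
  · simpa using hχ.map_smul ha (f v)
  · simpa [hχ.2.2.1] using hf.eq_iff' f.map_zero

theorem map_add_eq_of_lt (hχ : IsNANorm χ) {v w : V} (h : χ w < χ v) : χ (v + w) = χ w := by
  refine le_antisymm ?_ ((min_eq_right h.le).symm.trans_le (hχ.min_le_map_add v w))
  by_contra! hlt
  have := hχ.min_le_map_add (v + w) (-v)
  rw [hχ.map_neg, add_neg_cancel_comm] at this
  exact (lt_min hlt h).not_ge this

theorem map_add_eq_min_of_le (hχ : IsNANorm χ) {v w : V} (h : χ (v + w) ≤ χ v) :
    χ (v + w) = min (χ v) (χ w) := by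
  rcases lt_or_ge (χ w) (χ v) with hlt | hle
  · rw [hχ.map_add_eq_of_lt hlt, min_eq_right hlt.le]
  · rw [min_eq_left hle]
    exact le_antisymm h (min_eq_left hle ▸ hχ.min_le_map_add v w)

theorem map_smul_add_eq_min (hχ : IsNANorm χ) {N : Submodule ℂ V} {e : V}
    (he : ∀ x ∈ N, χ (e + x) ≤ χ e) {c : ℂ} (hc : c ≠ 0) {x : V} (hx : x ∈ N) :
    χ (c • e + x) = min (χ e) (χ x) :=
  calc χ (c • e + x) = χ (c • (e + c⁻¹ • x)) := by rw [smul_add, smul_inv_smul₀ hc]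
    _ = χ (e + c⁻¹ • x) := hχ.map_smul hc _
    _ = min (χ e) (χ (c⁻¹ • x)) := hχ.map_add_eq_min_of_le (he _ (N.smul_mem _ hx))
    _ = min (χ e) (χ x) := by rw [hχ.map_smul (inv_ne_zero hc)]

def superlevel (hχ : IsNANorm χ) (t : EReal) : Submodule ℂ V where
  carrier := {v | t ≤ χ v}
  add_mem' {v w} hv hw := (le_min hv hw).trans (hχ.min_le_map_add v w)
  zero_mem' := by simp [hχ.map_zero]
  smul_mem' a v hv := hv.trans (hχ.le_map_smul a v)

def strictSuperlevel (hχ : IsNANorm χ) {t : EReal} (ht : t ≠ ⊤) : Submodule ℂ V where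
  carrier := {v | t < χ v}
  add_mem' {v w} hv hw := (lt_min hv hw).trans_le (hχ.min_le_map_add v w)
  zero_mem' := by simpa [hχ.map_zero] using ht.lt_top
  smul_mem' a v hv := hv.trans_le (hχ.le_map_smul a v)

variable [FiniteDimensional ℂ V]

theorem finite_range (hχ : IsNANorm χ) : (Set.range χ).Finite := by
  have hanti : StrictAntiOn (fun t => finrank ℂ (hχ.superlevel t)) (Set.range χ) := by
    rintro _ ⟨v, rfl⟩ t' - hlt
    refine Submodule.finrank_lt_finrank_of_lt (lt_of_le_of_ne
      (fun w hw => hlt.le.trans hw) fun heq => ?_)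
    have hv : v ∈ hχ.superlevel (χ v) := le_refl (χ v)
    exact hlt.not_ge (heq ▸ hv : v ∈ hχ.superlevel t')
  refine Set.Finite.of_finite_image ((Set.finite_Iic (finrank ℂ V)).subset ?_) hanti.injOn
  rintro _ ⟨t, -, rfl⟩
  exact Submodule.finrank_le _

theorem exists_forall_le_of_mem (hχ : IsNANorm χ) {s : Set V} (hs : s.Nonempty) :
    ∃ e ∈ s, ∀ v ∈ s, χ v ≤ χ e := by
  obtain ⟨_, ⟨e, he, rfl⟩, hmax⟩ := Set.exists_max_image (χ '' s) id
    (hχ.finite_range.subset (Set.image_subset_range χ s)) (hs.image χ)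
  exact ⟨e, he, fun v hv => hmax (χ v) ⟨v, hv, rfl⟩⟩

theorem exists_forall_map_le (hχ : IsNANorm χ) : ∃ v₀, ∀ v, χ v₀ ≤ χ v := by
  obtain ⟨_, ⟨v₀, rfl⟩, hmin⟩ := Set.exists_min_image (Set.range χ) id hχ.finite_range
    (Set.range_nonempty χ)
  exact ⟨v₀, fun v => hmin (χ v) ⟨v, rfl⟩⟩

theorem exists_dual_ne_zero_isLeast_off_ker [Nontrivial V] (hχ : IsNANorm χ) :
    ∃ f : Dual ℂ V, f ≠ 0 ∧ ∀ v, f v ≠ 0 → ∀ w, χ v ≤ χ w := by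
  obtain ⟨v₀, hv₀⟩ := hχ.exists_forall_map_le
  obtain ⟨w, hw⟩ := exists_ne (0 : V)
  have hm : χ v₀ ≠ ⊤ := ne_top_of_le_ne_top (mt (hχ.2.2.1 w).mp hw) (hv₀ w)
  have hproper : hχ.strictSuperlevel hm < ⊤ :=
    lt_top_iff_ne_top.mpr fun htop =>
      lt_irrefl (χ v₀) (show v₀ ∈ hχ.strictSuperlevel hm from htop ▸ Submodule.mem_top)
  obtain ⟨f, hf, hle⟩ := (hχ.strictSuperlevel hm).exists_le_ker_of_lt_top hproper
  refine ⟨f, hf, fun v hv w => ?_⟩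
  have hv' : ¬ χ v₀ < χ v := fun hlt => hv (hle hlt)
  exact (not_lt.mp hv').trans (hv₀ w)

end IsNANorm

section

variable {V : Type*} [AddCommGroup V] [Module ℂ V]

theorem exists_dual_apply_eq_one_forall_ker_le [FiniteDimensional ℂ V] [Nontrivial V]
    {χ χ' : V → EReal} (hχ : IsNANorm χ) (hχ' : IsNANorm χ') :
    ∃ (f : Dual ℂ V) (e : V), f e = 1 ∧
      ∀ x ∈ LinearMap.ker f, χ (e + x) ≤ χ e ∧ χ' (e + x) ≤ χ' e := by
  obtain ⟨f, hf, hmin⟩ := hχ.exists_dual_ne_zero_isLeast_off_ker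
  obtain ⟨e, he, hmax⟩ := hχ'.exists_forall_le_of_mem (s := {v | f v = 1})
    ((LinearMap.surjective hf) 1)
  refine ⟨f, e, he, fun x hx => ⟨hmin _ ?_ e, hmax _ ?_⟩⟩ <;> simp_all

theorem diagonalizedBy_fin_zero {χ : V → EReal} (hχ : IsNANorm χ)
    (b : Basis (Fin 0) ℂ V) : DiagonalizedBy b χ := fun a => by
  simp [hχ.map_zero, iInf_of_empty]

theorem DiagonalizedBy.mkFinCons {χ : V → EReal} (hχ : IsNANorm χ) {n : ℕ} {N : Submodule ℂ V}
    {y : V} {bN : Basis (Fin n) ℂ N} (hli : ∀ (c : ℂ), ∀ x ∈ N, c • y + x = 0 → c = 0)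
    (hsp : ∀ z : V, ∃ c : ℂ, z + c • y ∈ N) (hdiag : DiagonalizedBy bN (χ ∘ N.subtype))
    (hy : ∀ x ∈ N, χ (y + x) ≤ χ y) : DiagonalizedBy (bN.mkFinCons y hli hsp) χ := by
  intro a
  set x : V := ∑ i : Fin n, a i.succ • (bN i : V)
  have hx : x ∈ N := N.sum_mem fun i _ => N.smul_mem _ (bN i).2
  have hχx : χ x = ⨅ (i : Fin n) (_ : a i.succ ≠ 0), χ (bN i) := by
    simpa [x] using hdiag fun i => a i.succ
  rw [Fin.sum_univ_succ, iInf_fin_succ, Basis.coe_mkFinCons]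
  simp only [Fin.cons_zero, Fin.cons_succ, Function.comp_apply]
  rw [← hχx]
  rcases eq_or_ne (a 0) 0 with ha | ha
  · simp [ha, x]
  · rw [hχ.map_smul_add_eq_min hy ha hx, iInf_pos ha]

theorem exists_basis_diagonalizedBy_of_finrank_eq [FiniteDimensional ℂ V] {n : ℕ}
    (hn : finrank ℂ V = n) {χ χ' : V → EReal} (hχ : IsNANorm χ) (hχ' : IsNANorm χ') :
    ∃ b : Basis (Fin n) ℂ V, DiagonalizedBy b χ ∧ DiagonalizedBy b χ' := by
  induction n generalizing V with
  | zero =>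
    have := finrank_zero_iff.mp hn
    exact ⟨.empty V, diagonalizedBy_fin_zero hχ _, diagonalizedBy_fin_zero hχ' _⟩
  | succ n ih =>
    have := finrank_pos_iff.mp (hn ▸ n.succ_pos : 0 < finrank ℂ V)
    obtain ⟨f, e, hfe, he⟩ := exists_dual_apply_eq_one_forall_ker_le hχ hχ'
    have hf : f ≠ 0 := fun h => by simp [h] at hfe
    obtain ⟨bH, hd, hd'⟩ := ih (V := LinearMap.ker f)
      (by have := f.finrank_ker_add_one_of_ne_zero hf; omega)
      (hχ.comp (LinearMap.ker f).injective_subtype) (hχ'.comp (LinearMap.ker f).injective_subtype)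
    have hli : ∀ c : ℂ, ∀ x ∈ LinearMap.ker f, c • e + x = 0 → c = 0 := fun c x hx h => by
      simpa [hfe, LinearMap.mem_ker.mp hx] using congrArg f h
    have hsp : ∀ z, ∃ c : ℂ, z + c • e ∈ LinearMap.ker f := fun z => ⟨-f z, by simp [hfe]⟩
    exact ⟨bH.mkFinCons e hli hsp, hd.mkFinCons hχ hli hsp fun x hx => (he x hx).1,
      hd'.mkFinCons hχ' hli hsp fun x hx => (he x hx).2⟩

end

/-- Any two non-Archimedean norms on a finite-dimensional complex vector space can be
simultaneously diagonalized: they belong to a common apartment. -/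
theorem naNorms_common_apartment {V : Type*} [AddCommGroup V] [Module ℂ V]
    [FiniteDimensional ℂ V] (χ χ' : V → EReal)
    (hχ : IsNANorm χ) (hχ' : IsNANorm χ') :
    ∃ b : Module.Basis (Fin (Module.finrank ℂ V)) ℂ V,
      DiagonalizedBy b χ ∧ DiagonalizedBy b χ' :=
  exists_basis_diagonalizedBy_of_finrank_eq rfl hχ hχ'
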